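/- Let N ≥ 1 and let 𝔪 be a positive finite Borel measure on ℝ^N. Define (G_t ⋆ 𝔪)(x) := ∫_{ℝ^N} G_t(x−y) d𝔪(y). Then lim_{t→∞} t^{N/2} ‖G_t ⋆ 𝔪‖_∞ = (4π)^{−N/2} 𝔪(ℝ^N). -/

import Mathlib

open MeasureTheory Real Set ENNReal Filter

noncomputable section

abbrev ESp (N : ℕ) := EuclideanSpace ℝ (Fin N)

def heatKernel (N : ℕ) (t : ℝ) (x : ESp N) : ℝ :=
  (4 * π * t) ^ (-(N : ℝ) / 2) * Real.exp (-‖x‖ ^ 2 / (4 * t))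

def heatConv (N : ℕ) (t : ℝ) (u : ESp N → ℝ) (x : ESp N) : ℝ :=
  ∫ y, heatKernel N t (x - y) * u y

/-- For a positive finite Borel measure `𝔪` on `ℝ^N`,
`t^{N/2} ‖G_t ⋆ 𝔪‖_∞ → (4π)^{-N/2} 𝔪(ℝ^N)` as `t → ∞`. -/
theorem stmt14 (N : ℕ) (hN : 1 ≤ N) (𝔪 : Measure (ESp N)) [IsFiniteMeasure 𝔪] :
    Tendsto
      (fun t : ℝ => t ^ ((N : ℝ) / 2) *
        (eLpNorm (fun x => ∫ y, heatKernel N t (x - y) ∂𝔪) ∞ volume).toReal)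
      atTop (nhds ((4 * π) ^ (-(N : ℝ) / 2) * (𝔪 Set.univ).toReal)) := by
  have hπ : (0:ℝ) < 4 * π := by positivity
  set c : ℝ := (4 * π) ^ (-(N:ℝ)/2) with hc
  have hc0 : 0 < c := Real.rpow_pos_of_pos hπ _
  set m : ℝ := (𝔪 Set.univ).toReal with hm
  have hm0 : 0 ≤ m := ENNReal.toReal_nonneg
  set L : ℝ → ℝ := fun t => ∫ y, Real.exp (-(‖y‖+1)^2/(4*t)) ∂𝔪 with hLdef
  have hLcont : ∀ t : ℝ, Continuous (fun y : ESp N => Real.exp (-(‖y‖+1)^2/(4*t))) := by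
    intro t; continuity
  have hLle1 : ∀ t : ℝ, 0 < t → ∀ y : ESp N, Real.exp (-(‖y‖+1)^2/(4*t)) ≤ 1 := by
    intro t ht y
    rw [Real.exp_le_one_iff]
    exact div_nonpos_of_nonpos_of_nonneg (neg_nonpos.mpr (by positivity)) (by positivity)
  have hLint : ∀ t : ℝ, 0 < t →
      Integrable (fun y : ESp N => Real.exp (-(‖y‖+1)^2/(4*t))) 𝔪 := by
    intro t ht
    refine (integrable_const (1:ℝ)).mono' ((hLcont t).aestronglyMeasurable) ?_
    filter_upwards with y
    rw [Real.norm_eq_abs, abs_of_pos (Real.exp_pos _)]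
    exact hLle1 t ht y
  have hLnn : ∀ t : ℝ, 0 ≤ L t := fun t =>
    integral_nonneg fun y => (Real.exp_pos _).le
  -- dominated convergence : L t → m
  have hLtend : Tendsto L atTop (nhds m) := by
    have h1 : (∫ (_ : ESp N), (1:ℝ) ∂𝔪) = m := by
      rw [integral_const, smul_eq_mul, mul_one]; rfl
    rw [← h1]
    refine tendsto_integral_filter_of_dominated_convergence (fun _ => (1:ℝ))
      ?_ ?_ (integrable_const 1) ?_
    · filter_upwards with t using (hLcont t).aestronglyMeasurable
    · filter_upwards [eventually_gt_atTop (0:ℝ)] with t ht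
      filter_upwards with y
      rw [Real.norm_eq_abs, abs_of_pos (Real.exp_pos _)]
      exact hLle1 t ht y
    · filter_upwards with y
      have harg : Tendsto (fun t : ℝ => -(‖y‖+1)^2/(4*t)) atTop (nhds 0) := by
        apply Tendsto.div_atTop (tendsto_const_nhds)
        exact (tendsto_id.const_mul_atTop (by norm_num : (0:ℝ) < 4))
      have := (Real.continuous_exp.tendsto 0).comp harg
      simpa [Function.comp_def] using this
  -- key bounds for t > 0
  have key : ∀ t : ℝ, 0 < t →
      c * L t ≤ t ^ ((N:ℝ)/2) *
          (eLpNorm (fun x => ∫ y, heatKernel N t (x - y) ∂𝔪) ∞ volume).toReal ∧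
      t ^ ((N:ℝ)/2) *
          (eLpNorm (fun x => ∫ y, heatKernel N t (x - y) ∂𝔪) ∞ volume).toReal ≤ c * m := by
    intro t ht
    set f : ESp N → ℝ := fun x => ∫ y, heatKernel N t (x - y) ∂𝔪 with hfdef
    set a : ℝ := (4 * π * t) ^ (-(N:ℝ)/2) with hadef
    have ha0 : 0 < a := Real.rpow_pos_of_pos (by positivity) _
    have hKnn : ∀ z : ESp N, 0 ≤ heatKernel N t z := by
      intro z; unfold heatKernel; positivity
    have hKle : ∀ z : ESp N, heatKernel N t z ≤ a := by
      intro z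
      rw [show heatKernel N t z = a * Real.exp (-‖z‖ ^ 2 / (4 * t)) from rfl]
      have hexp : Real.exp (-‖z‖ ^ 2 / (4 * t)) ≤ 1 := by
        rw [Real.exp_le_one_iff]
        exact div_nonpos_of_nonpos_of_nonneg (neg_nonpos.mpr (by positivity)) (by positivity)
      calc a * Real.exp (-‖z‖ ^ 2 / (4 * t)) ≤ a * 1 := by
            exact mul_le_mul_of_nonneg_left hexp ha0.le
        _ = a := mul_one a
    have hKcont : ∀ x : ESp N, Continuous (fun y : ESp N => heatKernel N t (x - y)) := by
      intro x; unfold heatKernel; continuity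
    have hKint : ∀ x : ESp N, Integrable (fun y : ESp N => heatKernel N t (x - y)) 𝔪 := by
      intro x
      refine (integrable_const a).mono' ((hKcont x).aestronglyMeasurable) ?_
      filter_upwards with y
      rw [Real.norm_eq_abs, abs_of_nonneg (hKnn _)]
      exact hKle _
    have hfnn : ∀ x, 0 ≤ f x := fun x => integral_nonneg fun y => hKnn _
    have hub : ∀ x, f x ≤ a * m := by
      intro x
      calc f x ≤ ∫ _, a ∂𝔪 := integral_mono (hKint x) (integrable_const a) fun y => hKle _
        _ = a * m := by rw [integral_const, smul_eq_mul, mul_comm]; rfl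
    have h1 : eLpNorm f ∞ volume ≤ ENNReal.ofReal (a * m) := by
      rw [eLpNorm_exponent_top]
      exact eLpNormEssSup_le_of_ae_bound (ae_of_all _ fun x => by
        rw [Real.norm_eq_abs, abs_of_nonneg (hfnn x)]; exact hub x)
    have h1' : (eLpNorm f ∞ volume).toReal ≤ a * m :=
      ENNReal.toReal_le_of_le_ofReal (by positivity) h1
    -- lower bound
    have hlb : ∀ x : ESp N, ‖x‖ ≤ 1 → a * L t ≤ f x := by
      intro x hx
      have hpt : ∀ y : ESp N, a * Real.exp (-(‖y‖+1)^2/(4*t)) ≤ heatKernel N t (x - y) := by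
        intro y
        unfold heatKernel
        apply mul_le_mul_of_nonneg_left _ ha0.le
        apply Real.exp_le_exp.mpr
        apply div_le_div_of_nonneg_right _ (by positivity)
        · rw [neg_le_neg_iff]
          have hxy : ‖x - y‖ ≤ ‖y‖ + 1 := by
            calc ‖x - y‖ ≤ ‖x‖ + ‖y‖ := norm_sub_le x y
              _ ≤ ‖y‖ + 1 := by linarith
          calc ‖x - y‖ ^ 2 ≤ (‖y‖ + 1) ^ 2 := by
                apply pow_le_pow_left₀ (norm_nonneg _) hxy
            _ = (‖y‖ + 1) ^ 2 := rfl
      calc a * L t = ∫ y, a * Real.exp (-(‖y‖+1)^2/(4*t)) ∂𝔪 := (integral_const_mul a _).symm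
        _ ≤ ∫ y, heatKernel N t (x - y) ∂𝔪 :=
            integral_mono ((hLint t ht).const_mul a) (hKint x) hpt
    have h2 : ENNReal.ofReal (a * L t) ≤ eLpNorm f ∞ volume := by
      rw [eLpNorm_exponent_top]
      by_contra h
      push_neg at h
      have hae := ae_lt_of_essSup_lt h
      rw [ae_iff] at hae
      have hsub : Metric.ball (0 : ESp N) 1 ⊆
          {x : ESp N | ¬ (‖f x‖₊ : ℝ≥0∞) < ENNReal.ofReal (a * L t)} := by
        intro x hx
        simp only [Set.mem_setOf_eq, not_lt]
        have hx1 : ‖x‖ ≤ 1 := by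
          have := Metric.mem_ball.mp hx
          simpa [dist_eq_norm] using this.le
        calc ENNReal.ofReal (a * L t) ≤ ENNReal.ofReal (f x) :=
              ENNReal.ofReal_le_ofReal (hlb x hx1)
          _ = (‖f x‖₊ : ℝ≥0∞) := (Real.enorm_eq_ofReal (hfnn x)).symm
      exact absurd (measure_mono_null hsub hae)
        (Metric.measure_ball_pos volume (0 : ESp N) one_pos).ne'
    have h2' : a * L t ≤ (eLpNorm f ∞ volume).toReal := by
      have hne : eLpNorm f ∞ volume ≠ ⊤ := (h1.trans_lt ENNReal.ofReal_lt_top).ne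
      have := ENNReal.toReal_mono hne h2
      rwa [ENNReal.toReal_ofReal (by positivity)] at this
    -- algebra
    have hta : t ^ ((N:ℝ)/2) * a = c := by
      rw [hadef, Real.mul_rpow hπ.le ht.le, mul_comm c, ← mul_assoc,
        ← Real.rpow_add ht, show (N:ℝ)/2 + -(N:ℝ)/2 = 0 by ring, Real.rpow_zero, one_mul]
    have htpos : (0:ℝ) < t ^ ((N:ℝ)/2) := Real.rpow_pos_of_pos ht _
    constructor
    · calc c * L t = t ^ ((N:ℝ)/2) * (a * L t) := by rw [← hta]; ring
        _ ≤ _ := mul_le_mul_of_nonneg_left h2' htpos.le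
    · calc t ^ ((N:ℝ)/2) * (eLpNorm f ∞ volume).toReal
          ≤ t ^ ((N:ℝ)/2) * (a * m) := mul_le_mul_of_nonneg_left h1' htpos.le
        _ = c * m := by rw [← hta]; ring
  refine tendsto_of_tendsto_of_tendsto_of_le_of_le' (hLtend.const_mul c)
    tendsto_const_nhds ?_ ?_
  · filter_upwards [eventually_gt_atTop (0:ℝ)] with t ht
    exact (key t ht).1
  · filter_upwards [eventually_gt_atTop (0:ℝ)] with t ht
    exact (key t ht).2
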